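/- Let μ, σ, Δ > 0 and h(x) = N((x+μΔ)/(σ√Δ)) - e^{-2μx/σ²}·N((-x+μΔ)/(σ√Δ)) for x ≥ 0. Then h(x) ∈ (0,1) for x > 0, h is strictly increasing on [0,∞), and h(x) → 1 as x → ∞. -/

import Mathlib

/-!
Write `N(t) = P(Z < t)` for a standard Gaussian `Z`. Since the Gaussian law and Lebesgue measure
are mutually absolutely continuous, every interval of positive length has positive Gaussian mass,
which gives `0 < N < 1` and strict monotonicity of `N`; continuity from below gives `N(t) → 1`.
In `h(x) = N(a x) - e^{-2μx/σ²} N(b x)` the argument `a` increases and `b` decreases, so the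
subtracted term is a product of positive nonincreasing factors and `h` is strictly increasing
on all of `ℝ`; that term decays to `0` with the exponential, so `h → 1`. For `x > 0` we have
`b x < a x` and `e^{-2μx/σ²} < 1`, hence `h x > 0`.
-/

open Real Filter

/-- The standard normal cumulative distribution function. -/
noncomputable def stdNormalCDF (t : ℝ) : ℝ :=
  ∫ u in Set.Iio t, (1 / Real.sqrt (2 * Real.pi)) * Real.exp (-u ^ 2 / 2)

open MeasureTheory ProbabilityTheory Set

lemma measureReal_gaussianReal_pos (m : ℝ) {v : NNReal} (hv : v ≠ 0) {s : Set ℝ}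
    (hs : volume s ≠ 0) : 0 < (gaussianReal m v).real s :=
  ENNReal.toReal_pos (mt (gaussianReal_absolutelyContinuous' m hv ·) hs) (measure_ne_top _ _)

lemma stdNormalCDF_eq_measureReal (t : ℝ) :
    stdNormalCDF t = (gaussianReal 0 1).real (Iio t) := by
  have hnonneg : 0 ≤ ∫ u in Iio t, gaussianPDFReal 0 1 u :=
    setIntegral_nonneg measurableSet_Iio fun _ _ ↦ gaussianPDFReal_nonneg _ _ _
  rw [measureReal_def, gaussianReal_apply_eq_integral _ one_ne_zero, ENNReal.toReal_ofReal hnonneg]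
  simp [stdNormalCDF, gaussianPDFReal]

lemma stdNormalCDF_pos (t : ℝ) : 0 < stdNormalCDF t := by
  rw [stdNormalCDF_eq_measureReal]
  exact measureReal_gaussianReal_pos 0 one_ne_zero (by simp)

lemma stdNormalCDF_lt_one (t : ℝ) : stdNormalCDF t < 1 := by
  have hpos : 0 < (gaussianReal 0 1).real (Iio t)ᶜ :=
    measureReal_gaussianReal_pos 0 one_ne_zero (by simp)
  rw [probReal_compl_eq_one_sub measurableSet_Iio] at hpos
  rw [stdNormalCDF_eq_measureReal]
  linarith

lemma stdNormalCDF_strictMono : StrictMono stdNormalCDF := by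
  intro s t hst
  have hdiff :=
    measureReal_sdiff (μ := gaussianReal 0 1) (Iio_subset_Iio hst.le) measurableSet_Iio
  have hpos : 0 < (gaussianReal 0 1).real (Iio t \ Iio s) :=
    measureReal_gaussianReal_pos 0 one_ne_zero (by rw [Iio_sdiff_Iio]; simp [hst])
  rw [stdNormalCDF_eq_measureReal, stdNormalCDF_eq_measureReal]
  linarith

lemma tendsto_stdNormalCDF_atTop : Tendsto stdNormalCDF atTop (nhds 1) := by
  have hmass := tendsto_measure_iUnion_atTop (μ := gaussianReal 0 1) (monotone_Iio (α := ℝ))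
  rw [iUnion_Iio, measure_univ] at hmass
  simpa [Function.comp_def, ← measureReal_def, ← stdNormalCDF_eq_measureReal] using
    (ENNReal.tendsto_toReal ENNReal.one_ne_top).comp hmass

noncomputable def survivalProb (μ σ Δ x : ℝ) : ℝ :=
  stdNormalCDF ((x + μ * Δ) / (σ * √Δ))
    - exp (-2 * μ * x / σ ^ 2) * stdNormalCDF ((-x + μ * Δ) / (σ * √Δ))

section survivalProb

variable {μ σ Δ : ℝ}

lemma survivalProb_lt_one (x : ℝ) : survivalProb μ σ Δ x < 1 := by
  have hlt := stdNormalCDF_lt_one ((x + μ * Δ) / (σ * √Δ))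
  have hpos := mul_pos (exp_pos (-2 * μ * x / σ ^ 2))
    (stdNormalCDF_pos ((-x + μ * Δ) / (σ * √Δ)))
  unfold survivalProb
  linarith

lemma survivalProb_pos (hμ : 0 < μ) (hσ : 0 < σ) (hΔ : 0 < Δ) {x : ℝ} (hx : 0 < x) :
    0 < survivalProb μ σ Δ x := by
  have hexp : exp (-2 * μ * x / σ ^ 2) < 1 :=
    exp_lt_one_iff.mpr (div_neg_of_neg_of_pos (by nlinarith) (by positivity))
  unfold survivalProb
  rw [sub_pos]
  calc exp (-2 * μ * x / σ ^ 2) * stdNormalCDF ((-x + μ * Δ) / (σ * √Δ))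
      < stdNormalCDF ((-x + μ * Δ) / (σ * √Δ)) :=
        mul_lt_of_lt_one_left (stdNormalCDF_pos _) hexp
    _ < stdNormalCDF ((x + μ * Δ) / (σ * √Δ)) := stdNormalCDF_strictMono (by gcongr; linarith)

lemma survivalProb_strictMono (hμ : 0 ≤ μ) (hσ : 0 < σ) (hΔ : 0 < Δ) :
    StrictMono (survivalProb μ σ Δ) := by
  intro x y hxy
  have hgrowth :
      stdNormalCDF ((x + μ * Δ) / (σ * √Δ)) < stdNormalCDF ((y + μ * Δ) / (σ * √Δ)) :=
    stdNormalCDF_strictMono (by gcongr)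
  have hdecay : exp (-2 * μ * y / σ ^ 2) * stdNormalCDF ((-y + μ * Δ) / (σ * √Δ))
      ≤ exp (-2 * μ * x / σ ^ 2) * stdNormalCDF ((-x + μ * Δ) / (σ * √Δ)) := by
    gcongr ?_ * ?_
    · exact (stdNormalCDF_pos _).le
    · exact exp_le_exp.mpr (div_le_div_of_nonneg_right (by nlinarith) (sq_nonneg σ))
    · exact stdNormalCDF_strictMono.monotone (by gcongr)
  unfold survivalProb
  linarith

lemma tendsto_survivalProb_atTop (hμ : 0 < μ) (hσ : 0 < σ) (hΔ : 0 < Δ) :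
    Tendsto (survivalProb μ σ Δ) atTop (nhds 1) := by
  have hgrowth : Tendsto (fun x ↦ stdNormalCDF ((x + μ * Δ) / (σ * √Δ))) atTop (nhds 1) :=
    tendsto_stdNormalCDF_atTop.comp
      ((tendsto_atTop_add_const_right _ _ tendsto_id).atTop_div_const (by positivity))
  have hexponent : Tendsto (fun x ↦ -2 * μ * x / σ ^ 2) atTop atBot := by
    have hrate : -2 * μ / σ ^ 2 < 0 := div_neg_of_neg_of_pos (by linarith) (by positivity)
    convert tendsto_id.const_mul_atTop_of_neg hrate using 2 with x
    rw [id]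
    ring
  have hdecay : Tendsto
      (fun x ↦ exp (-2 * μ * x / σ ^ 2) * stdNormalCDF ((-x + μ * Δ) / (σ * √Δ)))
      atTop (nhds 0) :=
    squeeze_zero (fun x ↦ mul_nonneg (exp_pos _).le (stdNormalCDF_pos _).le)
      (fun x ↦ mul_le_of_le_one_right (exp_pos _).le (stdNormalCDF_lt_one _).le)
      (tendsto_exp_atBot.comp hexponent)
  rw [← sub_zero (1 : ℝ)]
  exact hgrowth.sub hdecay

end survivalProb

theorem BM_survival_probability_properties (μ σ Δ : ℝ) (hμ : 0 < μ) (hσ : 0 < σ)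
    (hΔ : 0 < Δ) (h : ℝ → ℝ)
    (hh : h = fun x => stdNormalCDF ((x + μ * Δ) / (σ * Real.sqrt Δ))
      - Real.exp (-2 * μ * x / σ ^ 2) * stdNormalCDF ((-x + μ * Δ) / (σ * Real.sqrt Δ))) :
    (∀ x : ℝ, 0 < x → h x ∈ Set.Ioo (0 : ℝ) 1) ∧ StrictMonoOn h (Set.Ici 0) ∧
      Tendsto h atTop (nhds 1) := by
  obtain rfl : h = survivalProb μ σ Δ := hh
  exact ⟨fun x hx ↦ ⟨survivalProb_pos hμ hσ hΔ hx, survivalProb_lt_one x⟩,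
    (survivalProb_strictMono hμ.le hσ hΔ).strictMonoOn _,
    tendsto_survivalProb_atTop hμ hσ hΔ⟩
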